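/- Every rule R in {R^+_min, R^max_min, R^+_Σ, R^max_Σ} satisfies weak continuity: for every PB instance I and project p with sat_i(p) > 0 for all voters i, and such that some feasible bundle contains p, there exist c, k ∈ ℕ such that after adding k new voters who each have satisfaction c for p, satisfaction 0 for every other project, and donate nothing, every score-maximizing feasible bundle contains p. -/

import Mathlib

/-- A participatory budgeting instance with projects, types, voters (with satisfaction
and donation vectors), a budget, and diversity constraints. -/
structure PBI where
  m : ℕ
  n : ℕ
  t : ℕ
  cost : Fin m → ℕ
  tau : Fin m → Fin t → ℕ
  sat : Fin n → Fin m → ℕ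
  don : Fin n → Fin m → ℕ
  budget : ℕ
  lo : Fin t → ℕ
  hi : Fin t → ℕ

/-- Feasibility: donation-reduced total cost within budget, diversity constraints met. -/
def PBI.feasible (I : PBI) (A : Finset (Fin I.m)) : Prop :=
  (∑ j ∈ A, (I.cost j - ∑ i : Fin I.n, I.don i j)) ≤ I.budget ∧
  ∀ z : Fin I.t, I.lo z ≤ ∑ j ∈ A, I.tau j z ∧ ∑ j ∈ A, I.tau j z ≤ I.hi z

/-- Add `k` new voters, each with satisfaction `c` for project `p`, satisfaction 0 for
every other project, and no donations. -/
def PBI.addVoters (I : PBI) (p : Fin I.m) (c k : ℕ) : PBI where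
  m := I.m
  n := I.n + k
  t := I.t
  cost := I.cost
  tau := I.tau
  sat := fun i q => if h : (i : ℕ) < I.n then I.sat ⟨i, h⟩ q else if q = p then c else 0
  don := fun i q => if h : (i : ℕ) < I.n then I.don ⟨i, h⟩ q else 0
  budget := I.budget
  lo := I.lo
  hi := I.hi

/-- The `R^+_min` score: minimum over voters of additive utility. -/
noncomputable def sMinAdd (I : PBI) (A : Finset (Fin I.m)) : ℕ := ⨅ i : Fin I.n, ∑ j ∈ A, I.sat i j

/-- The `R^max_min` score: minimum over voters of maximum satisfaction. -/
noncomputable def sMinMax (I : PBI) (A : Finset (Fin I.m)) : ℕ := ⨅ i : Fin I.n, A.sup (I.sat i)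

/-- The `R^+_Σ` score: sum over voters of additive utility. -/
def sSumAdd (I : PBI) (A : Finset (Fin I.m)) : ℕ := ∑ i : Fin I.n, ∑ j ∈ A, I.sat i j

/-- The `R^max_Σ` score: sum over voters of maximum satisfaction. -/
def sSumMax (I : PBI) (A : Finset (Fin I.m)) : ℕ := ∑ i : Fin I.n, A.sup (I.sat i)

/-!
Adding voters who like only `p` and donate nothing does not change feasibility. With a single
such voter (`c = k = 1`), every bundle without `p` leaves that voter with satisfaction `0`, so its
min-score is `0`, while a bundle containing `p` gives every voter positive satisfaction. For the
sum rules the new voters add exactly `k * c` to the score of bundles containing `p` and nothing to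
the others; taking `c = 1` and `k` above the largest possible original score (that of the full
set of projects under the additive sum) separates the two kinds of bundles.
-/

open Finset

lemma Finset.sup_ite_eq' {α : Type*} [DecidableEq α] (s : Finset α) (a : α) (c : ℕ) :
    s.sup (fun j => if j = a then c else 0) = if a ∈ s then c else 0 := by
  split_ifs with ha
  · exact le_antisymm (Finset.sup_le fun j _ => by split_ifs <;> simp)
      (le_sup_of_le ha (by simp))
  · exact Nat.eq_zero_of_le_zero <|
      Finset.sup_le fun j hj => by rw [if_neg (ne_of_mem_of_not_mem hj ha)]

namespace PBI

variable (I : PBI) (p : Fin I.m) (c k : ℕ)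

lemma addVoters_don_sum (j : Fin I.m) :
    ∑ i : Fin (I.addVoters p c k).n, (I.addVoters p c k).don i j = ∑ i, I.don i j := by
  change ∑ i : Fin (I.n + k), _ = _
  simp [Fin.sum_univ_add, addVoters]

lemma addVoters_feasible_iff (A : Finset (Fin I.m)) :
    (I.addVoters p c k).feasible A ↔ I.feasible A := by
  unfold feasible
  -- `A` is typed by `Fin I.m`, only defeq to `Fin (I.addVoters p c k).m`, so `rw` cannot see it
  erw [sum_congr rfl fun j _ => congrArg (I.cost j - ·) (I.addVoters_don_sum p c k j)]
  rfl

lemma addVoters_sat_castAdd (i : Fin I.n) (q : Fin I.m) :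
    (I.addVoters p c k).sat (Fin.castAdd k i) q = I.sat i q := by
  simp [addVoters]

lemma addVoters_sat_natAdd (i : Fin k) (q : Fin I.m) :
    (I.addVoters p c k).sat (Fin.natAdd I.n i) q = if q = p then c else 0 := by
  simp [addVoters]

lemma addVoters_sum_sat_natAdd (A : Finset (Fin I.m)) (i : Fin k) :
    ∑ j ∈ A, (I.addVoters p c k).sat (Fin.natAdd I.n i) j = if p ∈ A then c else 0 :=
  (sum_congr rfl fun j _ => I.addVoters_sat_natAdd p c k i j).trans (sum_ite_eq' A p _)

lemma addVoters_sup_sat_natAdd (A : Finset (Fin I.m)) (i : Fin k) :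
    A.sup ((I.addVoters p c k).sat (Fin.natAdd I.n i)) = if p ∈ A then c else 0 :=
  (sup_congr rfl fun j _ => I.addVoters_sat_natAdd p c k i j).trans
    (Finset.sup_ite_eq' A p c)

variable {I p c k}

lemma addVoters_sat_natAdd_of_ne (i : Fin k) {q : Fin I.m} (hq : q ≠ p) :
    (I.addVoters p c k).sat (Fin.natAdd I.n i) q = 0 := by
  rw [addVoters_sat_natAdd, if_neg hq]

lemma addVoters_sat_pos (hc : 0 < c) (hpos : ∀ i, 0 < I.sat i p) (i : Fin (I.n + k)) :
    0 < (I.addVoters p c k).sat i p := by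
  refine Fin.addCases (fun i => ?_) (fun i => ?_) i
  · simpa only [addVoters_sat_castAdd] using hpos i
  · rwa [addVoters_sat_natAdd, if_pos rfl]

end PBI

open PBI

section MinRules

variable {J : PBI} {A : Finset (Fin J.m)}

lemma sMinAdd_pos [Nonempty (Fin J.n)] {p : Fin J.m} (hpos : ∀ i, 0 < J.sat i p) (hp : p ∈ A) :
    0 < sMinAdd J A :=
  Nat.lt_of_succ_le <|
    le_ciInf fun i => (hpos i).trans_le (single_le_sum (fun _ _ => Nat.zero_le _) hp)

lemma sMinMax_pos [Nonempty (Fin J.n)] {p : Fin J.m} (hpos : ∀ i, 0 < J.sat i p) (hp : p ∈ A) :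
    0 < sMinMax J A :=
  Nat.lt_of_succ_le <| le_ciInf fun i => (hpos i).trans_le (le_sup hp)

lemma sMinAdd_eq_zero (i : Fin J.n) (hi : ∀ j ∈ A, J.sat i j = 0) : sMinAdd J A = 0 :=
  Nat.eq_zero_of_le_zero <| ciInf_le_of_le (OrderBot.bddBelow _) i (sum_eq_zero hi).le

lemma sMinMax_eq_zero (i : Fin J.n) (hi : ∀ j ∈ A, J.sat i j = 0) : sMinMax J A = 0 :=
  Nat.eq_zero_of_le_zero <|
    ciInf_le_of_le (OrderBot.bddBelow _) i (Finset.sup_le fun j hj => (hi j hj).le)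

end MinRules

section SumRules

variable {J : PBI} {A B : Finset (Fin J.m)}

lemma sSumAdd_mono (h : A ⊆ B) : sSumAdd J A ≤ sSumAdd J B :=
  sum_le_sum fun _ _ => sum_le_sum_of_subset h

lemma sSumMax_le_sSumAdd : sSumMax J A ≤ sSumAdd J A :=
  sum_le_sum fun _ _ =>
    Finset.sup_le fun _ hj => single_le_sum (fun _ _ => Nat.zero_le _) hj

end SumRules

variable {I : PBI} {p : Fin I.m}

lemma sSumAdd_addVoters (c k : ℕ) (A : Finset (Fin I.m)) :
    sSumAdd (I.addVoters p c k) A = sSumAdd I A + k * if p ∈ A then c else 0 := by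
  change ∑ i : Fin (I.n + k), _ = _
  rw [Fin.sum_univ_add]
  exact congrArg₂ (· + ·)
    (sum_congr rfl fun i _ => sum_congr rfl fun j _ => I.addVoters_sat_castAdd p c k i j)
    ((sum_congr rfl fun i _ => I.addVoters_sum_sat_natAdd p c k A i).trans (by simp))

lemma sSumMax_addVoters (c k : ℕ) (A : Finset (Fin I.m)) :
    sSumMax (I.addVoters p c k) A = sSumMax I A + k * if p ∈ A then c else 0 := by
  change ∑ i : Fin (I.n + k), _ = _
  rw [Fin.sum_univ_add]
  exact congrArg₂ (· + ·)
    (sum_congr rfl fun i _ => sup_congr rfl fun j _ => I.addVoters_sat_castAdd p c k i j)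
    ((sum_congr rfl fun i _ => I.addVoters_sup_sat_natAdd p c k A i).trans (by simp))

variable {A W : Finset (Fin I.m)} {c k : ℕ}

lemma sMinAdd_addVoters_lt (hc : 0 < c) (hk : 0 < k) (hpos : ∀ i, 0 < I.sat i p) (hpA : p ∈ A)
    (hpW : p ∉ W) : sMinAdd (I.addVoters p c k) W < sMinAdd (I.addVoters p c k) A := by
  have : Nonempty (Fin (I.addVoters p c k).n) := ⟨Fin.natAdd I.n ⟨0, hk⟩⟩
  rw [sMinAdd_eq_zero (J := I.addVoters p c k) (Fin.natAdd I.n ⟨0, hk⟩) fun j hj =>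
    addVoters_sat_natAdd_of_ne _ (ne_of_mem_of_not_mem hj hpW)]
  exact sMinAdd_pos (addVoters_sat_pos hc hpos) hpA

lemma sMinMax_addVoters_lt (hc : 0 < c) (hk : 0 < k) (hpos : ∀ i, 0 < I.sat i p) (hpA : p ∈ A)
    (hpW : p ∉ W) : sMinMax (I.addVoters p c k) W < sMinMax (I.addVoters p c k) A := by
  have : Nonempty (Fin (I.addVoters p c k).n) := ⟨Fin.natAdd I.n ⟨0, hk⟩⟩
  rw [sMinMax_eq_zero (J := I.addVoters p c k) (Fin.natAdd I.n ⟨0, hk⟩) fun j hj =>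
    addVoters_sat_natAdd_of_ne _ (ne_of_mem_of_not_mem hj hpW)]
  exact sMinMax_pos (addVoters_sat_pos hc hpos) hpA

lemma sSumAdd_addVoters_lt (hck : sSumAdd I univ < k * c) (hpA : p ∈ A) (hpW : p ∉ W) :
    sSumAdd (I.addVoters p c k) W < sSumAdd (I.addVoters p c k) A := by
  rw [sSumAdd_addVoters, sSumAdd_addVoters, if_pos hpA, if_neg hpW]
  have := sSumAdd_mono (subset_univ W)
  omega

lemma sSumMax_addVoters_lt (hck : sSumAdd I univ < k * c) (hpA : p ∈ A) (hpW : p ∉ W) :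
    sSumMax (I.addVoters p c k) W < sSumMax (I.addVoters p c k) A := by
  rw [sSumMax_addVoters, sSumMax_addVoters, if_pos hpA, if_neg hpW]
  have := (sSumMax_le_sSumAdd (A := W)).trans (sSumAdd_mono (subset_univ W))
  omega

/-- Each of the four rules satisfies weak continuity: if every voter has positive
satisfaction for `p` and some feasible bundle contains `p`, then there are `c`, `k`
such that after adding `k` new voters with satisfaction `c` for `p` only (and no
donations), every score-maximizing feasible bundle contains `p`. -/
theorem stmt_14 (sc : (I : PBI) → Finset (Fin I.m) → ℕ)
    (hsc : sc = sMinAdd ∨ sc = sMinMax ∨ sc = sSumAdd ∨ sc = sSumMax) :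
    ∀ (I : PBI) (p : Fin I.m), (∀ i, 0 < I.sat i p) → (∃ A, I.feasible A ∧ p ∈ A) →
      ∃ c k : ℕ, ∀ W, (I.addVoters p c k).feasible W →
        (∀ A, (I.addVoters p c k).feasible A →
          sc (I.addVoters p c k) A ≤ sc (I.addVoters p c k) W) →
        p ∈ W := by
  intro I p hpos ⟨A, hA, hpA⟩
  obtain ⟨c, k, hsep⟩ :
      ∃ c k, ∀ W, p ∉ W → sc (I.addVoters p c k) W < sc (I.addVoters p c k) A := by
    have hM : sSumAdd I univ < (sSumAdd I univ + 1) * 1 := by omega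
    rcases hsc with rfl | rfl | rfl | rfl
    exacts [⟨1, 1, fun W => sMinAdd_addVoters_lt one_pos one_pos hpos hpA⟩,
      ⟨1, 1, fun W => sMinMax_addVoters_lt one_pos one_pos hpos hpA⟩,
      ⟨1, _, fun W => sSumAdd_addVoters_lt hM hpA⟩,
      ⟨1, _, fun W => sSumMax_addVoters_lt hM hpA⟩]
  refine ⟨c, k, fun W _ hmax => by_contra fun hpW => ?_⟩
  exact (hsep W hpW).not_ge (hmax A ((addVoters_feasible_iff I p c k A).2 hA))
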